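/- For every integer l ≥ 1, one has lim_{δ → 0+} leb(A_{lδ} \ A)/δ = (1 − b)·l and lim_{δ → ∞} leb(A_{lδ} \ A) = leb(A). -/

import Mathlib

/-!
Since `d` is increasing, every point of `A_t` at height `s ≤ 0` already lies in `A`, so
`A_t \ A` is the translate by `(0, t)` of the part of `A` above height `-t`. Its area is
therefore `∫_{-t}^0 (d - b)`, whose right derivative at `0` is `d 0 - b = 1 - b` by continuity of
`d`; and as `t → ∞` the parts of `A` above height `-t` increase to `A`, so their areas tend to
`leb(A)` by continuity of measure from below.
-/

open MeasureTheory Set Filter Topology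

theorem volume_setOf_le_fst_lt (b : ℝ) {g : ℝ → ℝ} {S : Set ℝ}
    (hg : AEMeasurable g (volume.restrict S)) (hS : MeasurableSet S) :
    volume {p : ℝ × ℝ | p.2 ∈ S ∧ b ≤ p.1 ∧ p.1 < g p.2} =
      ∫⁻ s in S, ENNReal.ofReal (g s - b) := by
  -- `regionBetween` is transposed and has open fibres; the line `p.1 = b` is null.
  have hline : ∀ᵐ p : ℝ × ℝ, p.1 ≠ b :=
    Measure.quasiMeasurePreserving_fst.ae (compl_mem_ae_iff.2 (measure_singleton b))
  have hswap : MeasurePreserving (MeasurableEquiv.prodComm : ℝ × ℝ ≃ᵐ ℝ × ℝ) :=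
    Measure.measurePreserving_swap
  calc volume {p : ℝ × ℝ | p.2 ∈ S ∧ b ≤ p.1 ∧ p.1 < g p.2}
      = volume (Prod.swap ⁻¹' regionBetween (fun _ => b) g S) := by
        refine measure_congr (hline.mono fun p hp => ?_)
        change (_ ∧ _ ∧ _) = (_ ∧ _ ∧ _)
        rw [hp.symm.le_iff_lt]
        rfl
    _ = volume (regionBetween (fun _ => b) g S) := hswap.measure_preimage_equiv _
    _ = ∫⁻ s in S, ENNReal.ofReal (g s - b) := by
        rw [Measure.volume_eq_prod, volume_regionBetween_eq_lintegral aemeasurable_const hg hS]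
        rfl

theorem tendsto_measure_inter_preimage_snd_Ioi_neg {α : Type*} [MeasurableSpace α]
    (μ : Measure (α × ℝ)) (S : Set (α × ℝ)) :
    Tendsto (fun t => μ (S ∩ Prod.snd ⁻¹' Ioi (-t))) atTop (𝓝 (μ S)) := by
  have hmono : Monotone fun t : ℝ => S ∩ Prod.snd ⁻¹' Ioi (-t) := fun t t' h =>
    inter_subset_inter_right _ (preimage_mono (Ioi_subset_Ioi (neg_le_neg h)))
  have hunion : ⋃ t : ℝ, S ∩ Prod.snd ⁻¹' Ioi (-t) = S := by
    refine (iUnion_subset fun t => inter_subset_left).antisymm fun p hp => ?_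
    exact mem_iUnion.2 ⟨1 - p.2, hp, by simp⟩
  have := tendsto_measure_iUnion_atTop (μ := μ) hmono
  rwa [hunion] at this

theorem hasDerivWithinAt_integral_neg_Ioi {g : ℝ → ℝ} (hg : ContinuousOn g (Iic 0)) :
    HasDerivWithinAt (fun t => ∫ s in -t..0, g s) (g 0) (Ioi 0) 0 := by
  have hleft : HasDerivWithinAt (fun u => ∫ s in u..0, g s) (-g 0) (Iic 0) (-0) := by
    rw [neg_zero]
    exact intervalIntegral.integral_hasDerivWithinAt_left IntervalIntegrable.refl
      (hg.stronglyMeasurableAtFilter_nhdsWithin measurableSet_Iic 0) (hg 0 self_mem_Iic)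
  simpa [Function.comp_def] using
    hleft.scomp 0 (hasDerivWithinAt_neg 0 (Ioi 0)) fun t ht => neg_nonpos.2 (le_of_lt ht)

theorem tendsto_integral_neg_mul_div_nhdsGT {g : ℝ → ℝ} (hg : ContinuousOn g (Iic 0))
    {c : ℝ} (hc : 0 < c) :
    Tendsto (fun δ => (∫ s in -(c * δ)..0, g s) / δ) (𝓝[>] 0) (𝓝 (g 0 * c)) := by
  have hslope := (hasDerivWithinAt_iff_tendsto_slope' (lt_irrefl 0)).1
    (hasDerivWithinAt_integral_neg_Ioi hg)
  have hscale : Tendsto (c * ·) (𝓝[>] 0) (𝓝[>] 0) :=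
    tendsto_comap.mono_left (comap_mulLeft_nhdsGT_zero hc).ge
  refine ((hslope.comp hscale).mul_const c).congr' ?_
  filter_upwards [self_mem_nhdsWithin] with δ (hδ : 0 < δ)
  simp only [Function.comp_apply, slope_def_field, neg_zero, intervalIntegral.integral_same,
    sub_zero]
  field_simp

/-- `trawlSet b d t` is the translated trawl `A_t`. -/
def trawlSet (b : ℝ) (d : ℝ → ℝ) (t : ℝ) : Set (ℝ × ℝ) :=
  {p | p.2 ≤ t ∧ b ≤ p.1 ∧ p.1 < d (p.2 - t)}

section Trawl

variable {b : ℝ} {d : ℝ → ℝ} {t : ℝ}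

theorem trawlSet_diff_trawlSet_zero (hd : MonotoneOn d (Iic 0)) (ht : 0 ≤ t) :
    trawlSet b d t \ trawlSet b d 0 =
      (· + (0, -t)) ⁻¹' (trawlSet b d 0 ∩ Prod.snd ⁻¹' Ioi (-t)) := by
  ext ⟨x, s⟩
  simp only [trawlSet, Set.mem_sdiff, mem_inter_iff, mem_preimage, mem_ofPred_eq, mem_Ioi,
    Prod.mk_add_mk, add_zero, sub_zero, ← sub_eq_add_neg]
  constructor
  · rintro ⟨⟨hst, hbx, hxd⟩, hnot⟩
    have hs : 0 < s := lt_of_not_ge fun hs => hnot ⟨hs, hbx, hxd.trans_le <|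
      hd (by simp only [mem_Iic]; linarith) hs (by linarith)⟩
    exact ⟨⟨by linarith, hbx, hxd⟩, by linarith⟩
  · rintro ⟨⟨hst, hbx, hxd⟩, hs⟩
    exact ⟨⟨by linarith, hbx, hxd⟩, fun h => by linarith [h.1]⟩

theorem volume_trawlSet_diff_trawlSet_zero (hd : MonotoneOn d (Iic 0)) (ht : 0 ≤ t) :
    volume (trawlSet b d t \ trawlSet b d 0) =
      volume (trawlSet b d 0 ∩ Prod.snd ⁻¹' Ioi (-t)) := by
  rw [trawlSet_diff_trawlSet_zero hd ht, measure_preimage_add_right]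

theorem toReal_volume_trawlSet_zero_inter (hcont : ContinuousOn d (Iic 0))
    (hb : ∀ s ≤ 0, b ≤ d s) (ht : 0 ≤ t) :
    (volume (trawlSet b d 0 ∩ Prod.snd ⁻¹' Ioi (-t))).toReal = ∫ s in -t..0, (d s - b) := by
  have hset : trawlSet b d 0 ∩ Prod.snd ⁻¹' Ioi (-t) =
      {p : ℝ × ℝ | p.2 ∈ Ioc (-t) 0 ∧ b ≤ p.1 ∧ p.1 < d p.2} := by
    ext ⟨x, s⟩
    simp only [trawlSet, mem_inter_iff, mem_preimage, mem_ofPred_eq, mem_Ioi, mem_Ioc, sub_zero]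
    tauto
  have hd_Ioc : ContinuousOn d (Ioc (-t) 0) := hcont.mono Ioc_subset_Iic_self
  have hnonneg : 0 ≤ᵐ[volume.restrict (Ioc (-t) 0)] fun s => d s - b :=
    (ae_restrict_iff' measurableSet_Ioc).2 (.of_forall fun s hs => sub_nonneg.2 (hb s hs.2))
  rw [hset, volume_setOf_le_fst_lt b (hd_Ioc.aemeasurable measurableSet_Ioc) measurableSet_Ioc,
    intervalIntegral.integral_of_le (neg_nonpos.2 ht), integral_eq_lintegral_of_nonneg_ae hnonneg
      ((hd_Ioc.sub continuousOn_const).aestronglyMeasurable measurableSet_Ioc)]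

end Trawl

theorem trawl_increment_area_limits_general
    (b : ℝ)
    (d : ℝ → ℝ)
    (hd_cont : ContinuousOn d (Set.Iic 0))
    (hd_mono : MonotoneOn d (Set.Iic 0))
    (hd_range : ∀ s ≤ (0:ℝ), d s ∈ Set.Icc b 1)
    (hd0 : d 0 = 1)
    (A : ℝ → Set (ℝ × ℝ))
    (hA : ∀ t, A t = {p : ℝ × ℝ | p.2 ≤ t ∧ b ≤ p.1 ∧ p.1 < d (p.2 - t)}) :
    ∀ l : ℕ, 1 ≤ l →
      Filter.Tendsto (fun δ : ℝ => (volume (A ((l:ℝ)*δ) \ A 0)).toReal / δ)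
        (nhdsWithin 0 (Set.Ioi 0)) (nhds ((1 - b) * l)) ∧
      Filter.Tendsto (fun δ : ℝ => volume (A ((l:ℝ)*δ) \ A 0))
        Filter.atTop (nhds (volume (A 0))) := by
  intro l hl
  obtain rfl : A = trawlSet b d := funext hA
  have hl_pos : (0 : ℝ) < l := by exact_mod_cast hl
  have hvol : ∀ δ : ℝ, 0 ≤ δ → volume (trawlSet b d (l * δ) \ trawlSet b d 0) =
      volume (trawlSet b d 0 ∩ Prod.snd ⁻¹' Ioi (-(l * δ))) := fun δ hδ =>
    volume_trawlSet_diff_trawlSet_zero hd_mono (mul_nonneg hl_pos.le hδ)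
  constructor
  · have hlim := tendsto_integral_neg_mul_div_nhdsGT (g := fun s => d s - b)
      (hd_cont.sub continuousOn_const) hl_pos
    simp only [hd0] at hlim
    refine hlim.congr' ?_
    filter_upwards [self_mem_nhdsWithin] with δ (hδ : 0 < δ)
    rw [hvol δ hδ.le, toReal_volume_trawlSet_zero_inter hd_cont (fun s hs => (hd_range s hs).1)
      (mul_nonneg hl_pos.le hδ.le)]
  · refine ((tendsto_measure_inter_preimage_snd_Ioi_neg (volume : Measure (ℝ × ℝ)) _).comp
      (tendsto_id.const_mul_atTop hl_pos)).congr' ?_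
    filter_upwards [eventually_ge_atTop 0] with δ hδ
    exact (hvol δ hδ).symm

/-- For every integer `l ≥ 1`, `lim_{δ → 0+} leb(A_{lδ} \ A)/δ = (1 − b)·l`
and `lim_{δ → ∞} leb(A_{lδ} \ A) = leb(A)`. -/
theorem trawl_increment_area_limits
    (b : ℝ) (hb : b ∈ Set.Icc (0:ℝ) 1)
    (d : ℝ → ℝ)
    (hd_cont : ContinuousOn d (Set.Iic 0))
    (hd_mono : MonotoneOn d (Set.Iic 0))
    (hd_range : ∀ s ≤ (0:ℝ), d s ∈ Set.Icc b 1)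
    (hd0 : d 0 = 1)
    (hd_lim : Filter.Tendsto d Filter.atBot (nhds b))
    (hd_int : MeasureTheory.IntegrableOn (fun s => d s - b) (Set.Iic 0))
    (A : ℝ → Set (ℝ × ℝ))
    (hA : ∀ t, A t = {p : ℝ × ℝ | p.2 ≤ t ∧ b ≤ p.1 ∧ p.1 < d (p.2 - t)}) :
    ∀ l : ℕ, 1 ≤ l →
      Filter.Tendsto (fun δ : ℝ => (volume (A ((l:ℝ)*δ) \ A 0)).toReal / δ)
        (nhdsWithin 0 (Set.Ioi 0)) (nhds ((1 - b) * l)) ∧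
      Filter.Tendsto (fun δ : ℝ => volume (A ((l:ℝ)*δ) \ A 0))
        Filter.atTop (nhds (volume (A 0))) :=
  trawl_increment_area_limits_general b d hd_cont hd_mono hd_range hd0 A hA
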